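/- arXiv:2402.10707 — 2 statements merged into one kernel-verified Lean document; each statement's English description precedes it below -/
import Mathlib

section
/- (Corollary B3, first criterion for non-steepness.) Let n ≥ 2 be an integer, I₀ ∈ ℝⁿ, ϱ > 0, and let h be real-analytic on the open ball B(I₀,ϱ) with ∇h(I₀) ≠ 0. Suppose there exists a unit vector w ∈ ℝⁿ such that h^k_{I₀}[w,…,w] = 0 for every integer k ≥ 1. Then, setting Γ := span(w), the subspace Γ is orthogonal to ∇h(I₀) and π_Γ ∇h(I₀ + t·w) = 0 for every t ∈ (−ϱ,ϱ); consequently h is not steep at I₀: for every C > 0, δ > 0 and α ≥ 1, the steepness inequality at I₀ on Γ with coefficients C, δ and index α fails. -/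
/-!
If all derivatives of `h` at `I₀` vanish along `w`, the Taylor series of `t ↦ h (I₀ + t • w)` at
`0` is constant, so by the identity theorem `h` is constant on the whole chord of the ball through
`I₀` in direction `w`. Differentiating along the chord, `∇h` stays orthogonal to `w` there, so the
projected gradient `π_Γ ∇h` vanishes on a ray of `Γ = span w` issuing from `I₀`; the steepness
inequality, which demands that it be positive somewhere on every small sphere of `Γ`, then fails.
-/

open Metric Set
open scoped RealInnerProductSpace

noncomputable section

/-- The steepness inequality at `I` on `Γ` with coefficients `C, δ` and index `α`:
for every `ξ ∈ (0,δ]`,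
`max_{η∈[0,ξ]} min_{u∈Γ, ‖u‖=η} ‖π_Γ ∇f(I+u)‖ > C ξ^α`,
where `π_Γ` is the orthogonal projection onto `Γ`. -/
def SteepAt {n : ℕ} (f : EuclideanSpace ℝ (Fin n) → ℝ) (I : EuclideanSpace ℝ (Fin n))
    (Γ : Submodule ℝ (EuclideanSpace ℝ (Fin n))) (C δ α : ℝ) : Prop :=
  ∀ ξ ∈ Set.Ioc (0:ℝ) δ, ∃ η ∈ Set.Icc (0:ℝ) ξ, ∀ u ∈ Γ, ‖u‖ = η →
    C * ξ ^ α < ‖(Γ.orthogonalProjectionOnto (gradient f (I + u)) : EuclideanSpace ℝ (Fin n))‖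

open Filter Topology Nat

section LineRestriction

variable {𝕜 : Type*} [NontriviallyNormedField 𝕜]
  {E F : Type*} [NormedAddCommGroup E] [NormedSpace 𝕜 E] [NormedAddCommGroup F] [NormedSpace 𝕜 F]

theorem AnalyticAt.eventually_apply_add_smul_eq_of_iteratedFDeriv_eq_zero
    [CharZero 𝕜] [CompleteSpace F] {f : E → F} {x v : E} (hf : AnalyticAt 𝕜 f x)
    (hvan : ∀ k, 1 ≤ k → iteratedFDeriv 𝕜 k f x (fun _ => v) = 0) :
    ∀ᶠ t in 𝓝 (0 : 𝕜), f (x + t • v) = f x := by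
  obtain ⟨p, r, hp⟩ := hf
  have hsmul : Tendsto (fun t : 𝕜 => t • v) (𝓝 0) (𝓝 0) := by
    simpa using (tendsto_id (x := 𝓝 (0 : 𝕜))).smul_const v
  filter_upwards [hsmul.eventually (eball_mem_nhds _ hp.r_pos)] with t ht
  have hterms : ∀ k ≠ 0, ((k ! : 𝕜)⁻¹ • iteratedFDeriv 𝕜 k f x fun _ => t • v) = 0 := by
    intro k hk
    rw [(iteratedFDeriv 𝕜 k f x).map_smul_univ (fun _ => t) (fun _ => v),
      hvan k (one_le_iff_ne_zero.2 hk), smul_zero, smul_zero]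
  simpa using (hp.hasSum_iteratedFDeriv ht).unique (hasSum_single 0 hterms)

theorem lineDeriv_eq_zero_of_eventually_apply_add_smul_eq {f : E → F} {x v : E}
    (hf : ∀ᶠ t in 𝓝 (0 : 𝕜), f (x + t • v) = f x) : lineDeriv 𝕜 f x v = 0 := by
  have hf' : (fun t : 𝕜 => f (x + t • v)) =ᶠ[𝓝 0] fun _ => f x := hf
  rw [lineDeriv, hf'.deriv_eq, deriv_const]

end LineRestriction

section Chord

variable {E F : Type*} [NormedAddCommGroup E] [NormedSpace ℝ E]
  [NormedAddCommGroup F] [NormedSpace ℝ F] [CompleteSpace F]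
  {f : E → F} {x v : E} {ρ : ℝ}

theorem convex_preimage_ball_add_smul (x v : E) (ρ : ℝ) :
    Convex ℝ ((fun t : ℝ => x + t • v) ⁻¹' ball x ρ) := by
  have hline : (fun t : ℝ => x + t • v) = AffineMap.lineMap x (x + v) := by
    funext t
    simp [AffineMap.lineMap_apply, add_comm]
  rw [hline]
  exact (convex_ball x ρ).affine_preimage _

theorem AnalyticOnNhd.apply_add_smul_eq_of_iteratedFDeriv_eq_zero
    (hf : AnalyticOnNhd ℝ f (ball x ρ))
    (hvan : ∀ k, 1 ≤ k → iteratedFDeriv ℝ k f x (fun _ => v) = 0)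
    {t : ℝ} (ht : x + t • v ∈ ball x ρ) : f (x + t • v) = f x := by
  set S := (fun s : ℝ => x + s • v) ⁻¹' ball x ρ
  have hρ : 0 < ρ := pos_of_mem_ball ht
  have h0S : (0 : ℝ) ∈ S := by simpa [S] using hρ
  have hline : AnalyticOnNhd ℝ (fun s : ℝ => f (x + s • v)) S := fun s hs =>
    AnalyticAt.comp (f := fun s : ℝ => x + s • v) (hf (x + s • v) hs) (by fun_prop)
  exact hline.eqOn_of_preconnected_of_eventuallyEq analyticOnNhd_const
    (convex_preimage_ball_add_smul x v ρ).isPreconnected h0S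
    ((hf x (mem_ball_self hρ)).eventually_apply_add_smul_eq_of_iteratedFDeriv_eq_zero hvan) ht

theorem AnalyticOnNhd.fderiv_add_smul_apply_eq_zero_of_iteratedFDeriv_eq_zero
    (hf : AnalyticOnNhd ℝ f (ball x ρ))
    (hvan : ∀ k, 1 ≤ k → iteratedFDeriv ℝ k f x (fun _ => v) = 0)
    {t : ℝ} (ht : x + t • v ∈ ball x ρ) : fderiv ℝ f (x + t • v) v = 0 := by
  have hnear : ∀ᶠ s in 𝓝 (0 : ℝ), x + (t + s) • v ∈ ball x ρ :=
    (isOpen_ball.preimage (by fun_prop)).mem_nhds (by simpa using ht)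
  have hconst : ∀ᶠ s in 𝓝 (0 : ℝ), f (x + t • v + s • v) = f (x + t • v) := by
    filter_upwards [hnear] with s hs
    rw [add_assoc, ← add_smul, hf.apply_add_smul_eq_of_iteratedFDeriv_eq_zero hvan hs,
      hf.apply_add_smul_eq_of_iteratedFDeriv_eq_zero hvan ht]
  rw [← (hf _ ht).differentiableAt.lineDeriv_eq_fderiv]
  exact lineDeriv_eq_zero_of_eventually_apply_add_smul_eq hconst

end Chord

theorem AnalyticOnNhd.gradient_add_smul_mem_orthogonal_of_iteratedFDeriv_eq_zero
    {E : Type*} [NormedAddCommGroup E] [InnerProductSpace ℝ E] [CompleteSpace E]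
    {f : E → ℝ} {x v : E} {ρ : ℝ} (hf : AnalyticOnNhd ℝ f (ball x ρ))
    (hvan : ∀ k, 1 ≤ k → iteratedFDeriv ℝ k f x (fun _ => v) = 0)
    {t : ℝ} (ht : x + t • v ∈ ball x ρ) : gradient f (x + t • v) ∈ (ℝ ∙ v)ᗮ := by
  rw [Submodule.mem_orthogonal_singleton_iff_inner_right, real_inner_comm, inner_gradient_left]
  exact hf.fderiv_add_smul_apply_eq_zero_of_iteratedFDeriv_eq_zero hvan ht

theorem not_steepAt_of_orthogonalProjectionOnto_gradient_eq_zero {n : ℕ}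
    {f : EuclideanSpace ℝ (Fin n) → ℝ} {I w : EuclideanSpace ℝ (Fin n)}
    {Γ : Submodule ℝ (EuclideanSpace ℝ (Fin n))} (hwΓ : w ∈ Γ) (hw : ‖w‖ = 1)
    {ρ : ℝ} (hρ : 0 < ρ)
    (hzero : ∀ t ∈ Ico 0 ρ, Γ.orthogonalProjectionOnto (gradient f (I + t • w)) = 0)
    {C δ α : ℝ} (hC : 0 ≤ C) (hδ : 0 < δ) : ¬ SteepAt f I Γ C δ α := by
  intro hsteep
  set ξ := min δ (ρ / 2)
  have hξ : 0 < ξ := lt_min hδ (half_pos hρ)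
  obtain ⟨η, ⟨hη₀, hηξ⟩, hmin⟩ := hsteep ξ ⟨hξ, min_le_left _ _⟩
  have hηρ : η < ρ := by linarith [min_le_right δ (ρ / 2)]
  have hlt := hmin (η • w) (Γ.smul_mem η hwΓ)
    (by rw [norm_smul, hw, mul_one, Real.norm_of_nonneg hη₀])
  rw [hzero η ⟨hη₀, hηρ⟩, Submodule.coe_zero, norm_zero] at hlt
  exact hlt.not_ge (by positivity)

theorem statement6_general (n : ℕ) (I₀ : EuclideanSpace ℝ (Fin n)) (ϱ : ℝ)
    (hϱ : 0 < ϱ) (h : EuclideanSpace ℝ (Fin n) → ℝ)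
    (hreg : AnalyticOnNhd ℝ h (ball I₀ ϱ))
    (w : EuclideanSpace ℝ (Fin n)) (hw : ‖w‖ = 1)
    (hvan : ∀ k : ℕ, 1 ≤ k → iteratedFDeriv ℝ k h I₀ (fun _ => w) = 0) :
    (∀ u ∈ Submodule.span ℝ {w}, ⟪u, gradient h I₀⟫ = 0) ∧
    (∀ t ∈ Set.Ioo (-ϱ) ϱ,
      (Submodule.span ℝ {w}).orthogonalProjectionOnto (gradient h (I₀ + t • w)) = 0) ∧
    (∀ C > (0:ℝ), ∀ δ > (0:ℝ), ∀ α : ℝ, 1 ≤ α →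
      ¬ SteepAt h I₀ (Submodule.span ℝ {w}) C δ α) := by
  have hperp : ∀ t ∈ Ioo (-ϱ) ϱ, gradient h (I₀ + t • w) ∈ (ℝ ∙ w)ᗮ := fun t ht =>
    hreg.gradient_add_smul_mem_orthogonal_of_iteratedFDeriv_eq_zero hvan
      (by simpa [norm_smul, hw, abs_lt] using ht)
  have hproj : ∀ t ∈ Ioo (-ϱ) ϱ,
      (ℝ ∙ w).orthogonalProjectionOnto (gradient h (I₀ + t • w)) = 0 := fun t ht =>
    Submodule.orthogonalProjectionOnto_eq_zero_iff.2 (hperp t ht)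
  refine ⟨fun u hu => ?_, hproj, fun C hC δ hδ α _ => ?_⟩
  · simpa using (hperp 0 ⟨neg_neg_of_pos hϱ, hϱ⟩) u hu
  · exact not_steepAt_of_orthogonalProjectionOnto_gradient_eq_zero
      (Submodule.mem_span_singleton_self w) hw hϱ
      (fun t ht => hproj t ⟨by linarith [ht.1], ht.2⟩) hC.le hδ

/-- Corollary B3, first criterion for non-steepness. -/
theorem statement6 (n : ℕ) (hn : 2 ≤ n) (I₀ : EuclideanSpace ℝ (Fin n)) (ϱ : ℝ)
    (hϱ : 0 < ϱ) (h : EuclideanSpace ℝ (Fin n) → ℝ)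
    (hreg : AnalyticOnNhd ℝ h (ball I₀ ϱ))
    (hgrad : gradient h I₀ ≠ 0)
    (w : EuclideanSpace ℝ (Fin n)) (hw : ‖w‖ = 1)
    (hvan : ∀ k : ℕ, 1 ≤ k → iteratedFDeriv ℝ k h I₀ (fun _ => w) = 0) :
    (∀ u ∈ Submodule.span ℝ {w}, ⟪u, gradient h I₀⟫ = 0) ∧
    (∀ t ∈ Set.Ioo (-ϱ) ϱ,
      (Submodule.span ℝ {w}).orthogonalProjectionOnto (gradient h (I₀ + t • w)) = 0) ∧
    (∀ C > (0:ℝ), ∀ δ > (0:ℝ), ∀ α : ℝ, 1 ≤ α →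
      ¬ SteepAt h I₀ (Submodule.span ℝ {w}) C δ α) :=
  statement6_general n I₀ ϱ hϱ h hreg w hw hvan
end
end

section
/- (Theorem C1: steepness with index one on subspaces where the restricted Hessian is non-degenerate.) Let r ≥ 2 and n ≥ 3 be integers and m ∈ {2,…,n−1}. Let h be of class C^{2r−1} on a neighborhood of the origin of ℝⁿ with ∇h(0) ≠ 0. Let Γ ⊆ ℝⁿ be an m-dimensional linear subspace orthogonal to ∇h(0) such that the restriction to Γ × Γ of the Hessian bilinear form (u,v) ↦ h²₀[u,v] of h at the origin is non-degenerate. Then there exist C > 0 and δ > 0 such that the steepness inequality holds at 0 on Γ with coefficients C, δ and index 1. -/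
/-!
Write `B` for the Hessian of `h` at `0`, seen as a map `E → E*`, and `♯` for the Riesz
isomorphism `E* ≃ E`. Nondegeneracy of `B` on `Γ` says exactly that `u ↦ π_Γ (B u)^♯` is
injective on `Γ`, hence (finite dimension) bounded below: `‖π_Γ (B u)^♯‖ ≥ c ‖u‖`.
Since `π_Γ ∇h(0) = 0`, the map `π_Γ ∘ ∇h` has derivative `u ↦ π_Γ (B u)^♯` at `0`, so
`‖π_Γ ∇h(u)‖ ≥ c ‖u‖ / 2` for small `u ∈ Γ`; taking `η = ξ` gives the steepness inequality with
index one.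
-/

open Metric Set
open scoped RealInnerProductSpace

noncomputable section

open Filter Topology InnerProductSpace

theorem HasFDerivAt.eventually_mul_norm_le_norm_add {𝕜 E F : Type*} [NontriviallyNormedField 𝕜]
    [NormedAddCommGroup E] [NormedSpace 𝕜 E] [NormedAddCommGroup F] [NormedSpace 𝕜 F]
    {g : E → F} {L : E →L[𝕜] F} {x : E} (hg : HasFDerivAt g L x) (hgx : g x = 0)
    {s : Set E} {c : ℝ} (hc : 0 < c) (hL : ∀ u ∈ s, c * ‖u‖ ≤ ‖L u‖) :
    ∀ᶠ u in 𝓝 0, u ∈ s → c / 2 * ‖u‖ ≤ ‖g (x + u)‖ := by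
  filter_upwards [(hasFDerivAt_iff_isLittleO_nhds_zero.1 hg).def (half_pos hc)] with u hu hus
  rw [hgx, sub_zero] at hu
  calc c / 2 * ‖u‖ = c * ‖u‖ - c / 2 * ‖u‖ := by ring
    _ ≤ ‖L u‖ - ‖g (x + u) - L u‖ := sub_le_sub (hL u hus) hu
    _ ≤ ‖g (x + u)‖ := by
      linarith [norm_sub_norm_le (L u) (g (x + u)), norm_sub_rev (L u) (g (x + u))]

section InnerProduct

variable {E : Type*} [NormedAddCommGroup E] [InnerProductSpace ℝ E]

/-- `toDual` is only conjugate-linear in general, so its inverse does not coerce to a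
`→L[ℝ]` map. -/
abbrev InnerProductSpace.toDualSymmL (E : Type*) [NormedAddCommGroup E] [InnerProductSpace ℝ E]
    [CompleteSpace E] : StrongDual ℝ E →L[ℝ] E :=
  (toDual ℝ E).symm.toContinuousLinearEquiv.toContinuousLinearMap

theorem HasFDerivAt.hasFDerivAt_gradient [CompleteSpace E] {f : E → ℝ}
    {D : E →L[ℝ] StrongDual ℝ E} {x : E} (hD : HasFDerivAt (fderiv ℝ f) D x) :
    HasFDerivAt (gradient f) (toDualSymmL E ∘L D) x :=
  (toDualSymmL E).hasFDerivAt.comp x hD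

theorem Submodule.orthogonalProjectionOnto_toDual_symm_eq_zero_iff [CompleteSpace E]
    (K : Submodule ℝ E) [K.HasOrthogonalProjection] (φ : StrongDual ℝ E) :
    K.orthogonalProjectionOnto (toDualSymmL E φ) = 0 ↔ ∀ v ∈ K, φ v = 0 := by
  rw [Submodule.orthogonalProjectionOnto_eq_zero_iff, Submodule.mem_orthogonal']
  exact forall₂_congr fun v _ => by rw [← toDual_symm_apply (𝕜 := ℝ) (x := v) (y := φ)]; rfl

theorem Submodule.exists_pos_mul_norm_le_of_nondegenerate [CompleteSpace E] (K : Submodule ℝ E)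
    [FiniteDimensional ℝ K] [K.HasOrthogonalProjection] (B : E →L[ℝ] StrongDual ℝ E)
    (hB : ∀ u ∈ K, (∀ v ∈ K, B u v = 0) → u = 0) :
    ∃ c > 0, ∀ u ∈ K,
      c * ‖u‖ ≤ ‖(K.orthogonalProjectionOnto ∘L toDualSymmL E ∘L B) u‖ := by
  set P := K.orthogonalProjectionOnto ∘L toDualSymmL E ∘L B
  have hinj : Function.Injective (P ∘L K.subtypeL : K →L[ℝ] K).toLinearMap := by
    rw [← LinearMap.ker_eq_bot, LinearMap.ker_eq_bot']
    intro u hu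
    exact Subtype.ext (hB u u.2 ((K.orthogonalProjectionOnto_toDual_symm_eq_zero_iff (B u)).1 hu))
  obtain ⟨k, hk, hanti⟩ := (LinearMap.injective_iff_antilipschitz _).1 hinj
  have hk_pos : (0 : ℝ) < k := hk
  refine ⟨(k : ℝ)⁻¹, inv_pos.2 hk_pos, fun u hu => (inv_mul_le_iff₀ hk_pos).2 ?_⟩
  exact hanti.le_mul_norm (map_zero _) ⟨u, hu⟩

end InnerProduct

theorem steepAt_one_of_eventually {n : ℕ} {f : EuclideanSpace ℝ (Fin n) → ℝ}
    {I : EuclideanSpace ℝ (Fin n)} {Γ : Submodule ℝ (EuclideanSpace ℝ (Fin n))} {c : ℝ}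
    (hc : 0 < c)
    (h : ∀ᶠ u in 𝓝 0, u ∈ Γ → c * ‖u‖ ≤ ‖Γ.orthogonalProjectionOnto (gradient f (I + u))‖) :
    ∃ C > 0, ∃ δ > 0, SteepAt f I Γ C δ 1 := by
  obtain ⟨δ, hδ, hball⟩ := Metric.eventually_nhds_iff.1 h
  refine ⟨c / 2, half_pos hc, δ / 2, half_pos hδ, fun ξ hξ => ⟨ξ, ⟨hξ.1.le, le_rfl⟩, ?_⟩⟩
  intro u hu hnorm
  have hbound := hball (by rw [dist_zero_right, hnorm]; linarith [hξ.2]) hu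
  rw [Real.rpow_one]
  calc c / 2 * ξ < c * ‖u‖ := by rw [hnorm]; linarith [mul_pos hc hξ.1]
    _ ≤ _ := hbound

theorem statement7_general (r n : ℕ) (hr : 2 ≤ r)
    (h : EuclideanSpace ℝ (Fin n) → ℝ) (hreg : ContDiffAt ℝ (2*r-1 : ℕ) h 0)
    (Γ : Submodule ℝ (EuclideanSpace ℝ (Fin n)))
    (hΓperp : ∀ u ∈ Γ, ⟪u, gradient h 0⟫ = 0)
    (hnondeg : ∀ u ∈ Γ, (∀ v ∈ Γ, iteratedFDeriv ℝ 2 h 0 ![u, v] = 0) → u = 0) :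
    ∃ C > (0:ℝ), ∃ δ > (0:ℝ), SteepAt h 0 Γ C δ 1 := by
  have hC2 : ContDiffAt ℝ 2 h 0 := hreg.of_le (by exact_mod_cast (by omega : 2 ≤ 2 * r - 1))
  have hD : HasFDerivAt (fderiv ℝ h) (fderiv ℝ (fderiv ℝ h) 0) 0 :=
    ((hC2.fderiv_right (m := 1) (by norm_num)).differentiableAt one_ne_zero).hasFDerivAt
  obtain ⟨c, hc, hlow⟩ := Γ.exists_pos_mul_norm_le_of_nondegenerate (fderiv ℝ (fderiv ℝ h) 0)
    (by simpa only [iteratedFDeriv_two_apply, Matrix.cons_val_zero, Matrix.cons_val_one]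
      using hnondeg)
  have hproj : Γ.orthogonalProjectionOnto (gradient h 0) = 0 :=
    Submodule.orthogonalProjectionOnto_eq_zero_iff.2 ((Submodule.mem_orthogonal _ _).2 hΓperp)
  have hprojGrad := Γ.orthogonalProjectionOnto.hasFDerivAt.comp 0 hD.hasFDerivAt_gradient
  exact steepAt_one_of_eventually (half_pos hc)
    (hprojGrad.eventually_mul_norm_le_norm_add hproj hc hlow)

/-- Theorem C1: steepness with index one on subspaces where the restricted Hessian
is non-degenerate. -/
theorem statement7 (r n m : ℕ) (hr : 2 ≤ r) (hn : 3 ≤ n) (hm : 2 ≤ m ∧ m ≤ n - 1)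
    (h : EuclideanSpace ℝ (Fin n) → ℝ) (hreg : ContDiffAt ℝ (2*r-1 : ℕ) h 0)
    (hgrad : gradient h 0 ≠ 0)
    (Γ : Submodule ℝ (EuclideanSpace ℝ (Fin n))) (hΓdim : Module.finrank ℝ Γ = m)
    (hΓperp : ∀ u ∈ Γ, ⟪u, gradient h 0⟫ = 0)
    (hnondeg : ∀ u ∈ Γ, (∀ v ∈ Γ, iteratedFDeriv ℝ 2 h 0 ![u, v] = 0) → u = 0) :
    ∃ C > (0:ℝ), ∃ δ > (0:ℝ), SteepAt h 0 Γ C δ 1 :=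
  statement7_general r n hr h hreg Γ hΓperp hnondeg

end
end
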